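/- Let D_n^{(1)},…,D_n^{(m)}, δ_n^{(1)},…,δ_n^{(l)} be positive integers such that q_n^{(ν)}/δ_n^{(ν)} ∈ ℤ and (D_n^{(μ_2)}/δ_n^{(ν)})·p_n^{(μ_1,ν)} ∈ ℤ for all 1 ≤ μ_1 ≤ μ_2 ≤ m and ν = 1,…,l. Suppose that for every choice of l distinct indices μ = (μ_1,…,μ_l) with 1 ≤ μ_1 < … < μ_l ≤ m, the quantity (D_n^{(m)}/δ_n^{(1)})·(D_n^{(m−1)}/δ_n^{(2)})⋯(D_n^{(m−l+1)}/δ_n^{(l)})·det ε_n^{(μ,-)} tends to 0 as n → ∞. Suppose furthermore that for every integer l×m matrix λ of rank l, the l×l matrix λ·ε_n is non-singular for infinitely many n. Then the dimension over ℚ of ℚ + ℚγ_1 + ⋯ + ℚγ_m is at least 2 + m − l. -/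

import Mathlib

open Filter Matrix

private lemma aux_rat_mul_den_int (a : ℚ) (d : ℕ) (hd : a.den ∣ d) :
    ∃ z : ℤ, (z : ℚ) = a * d := by
  obtain ⟨c, hc⟩ := hd
  refine ⟨a.num * c, ?_⟩
  have hden : ((a.den : ℚ)) ≠ 0 := by
    exact_mod_cast a.den_nz
  have key : a * (a.den : ℚ) = (a.num : ℚ) := Rat.mul_den_eq_num a
  push_cast [hc]
  rw [← key]
  ring

private lemma aux_chain {K M : Type*} [Field K] [AddCommGroup M] [Module K M]
    [FiniteDimensional K M] :
    ∀ (k : ℕ) (W : Fin k → Submodule K M), (∀ i j : Fin k, i ≤ j → W j ≤ W i) →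
      (∀ i : Fin k, k - (i : ℕ) ≤ Module.finrank K (W i)) →
      ∃ v : Fin k → M, (∀ i, v i ∈ W i) ∧ LinearIndependent K v := by
  intro k
  induction k with
  | zero => exact fun W _ _ => ⟨fun i => 0, fun i => i.elim0, linearIndependent_empty_type⟩
  | succ k ih =>
    intro W hmono hrank
    obtain ⟨v, hv, hvi⟩ := ih (fun i => W i.succ)
      (fun i j hij => hmono _ _ (Fin.succ_le_succ_iff.mpr hij))
      (fun i => by
        have h := hrank i.succ
        simp only [Fin.val_succ] at h
        have : k + 1 - ((i : ℕ) + 1) = k - (i : ℕ) := by omega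
        rwa [this] at h)
    have hW0 : k + 1 ≤ Module.finrank K (W 0) := by simpa using hrank 0
    have hnle : ¬ (W 0 ≤ Submodule.span K (Set.range v)) := by
      intro hle
      have h1 : Module.finrank K (W 0) ≤ Module.finrank K (Submodule.span K (Set.range v)) :=
        Submodule.finrank_mono hle
      have h2 : Module.finrank K (Submodule.span K (Set.range v)) ≤ k := by
        classical
        refine (finrank_span_le_card _).trans ?_
        refine le_trans ?_ (Fintype.card_fin k).le
        convert Fintype.card_range_le v
        rfl
        rw [Set.toFinset_card]
      omega
    obtain ⟨x, hx0, hxs⟩ := SetLike.not_le_iff_exists.mp hnle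
    refine ⟨Fin.cons x v, ?_, linearIndependent_fin_cons.mpr ⟨hvi, hxs⟩⟩
    intro i
    refine Fin.cases ?_ ?_ i
    · simpa using hx0
    · intro j; simpa using hv j

set_option maxHeartbeats 2000000 in
theorem stmt_3 (m l : ℕ) (hl : 1 ≤ l) (hlm : l ≤ m)
    (γ : Fin m → ℝ) (q : ℕ → Fin l → ℚ) (p : ℕ → Fin m → Fin l → ℚ)
    (ε : ℕ → Fin m → Fin l → ℝ)
    (hε : ∀ n μ ν, ε n μ ν = (q n ν : ℝ) * γ μ - (p n μ ν : ℝ))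
    (D : ℕ → Fin m → ℕ) (δ : ℕ → Fin l → ℕ)
    (hD : ∀ n μ, 0 < D n μ) (hδ : ∀ n ν, 0 < δ n ν)
    (hq : ∀ n ν, ∃ a : ℤ, q n ν = (a : ℚ) * (δ n ν : ℚ))
    (hp : ∀ (n : ℕ) (μ₁ μ₂ : Fin m), μ₁ ≤ μ₂ → ∀ ν : Fin l,
      ∃ a : ℤ, (D n μ₂ : ℚ) * p n μ₁ ν = (a : ℚ) * (δ n ν : ℚ))
    (hdet : ∀ μs : Fin l → Fin m, StrictMono μs →
      Tendsto (fun n =>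
        (∏ i : Fin l,
          ((D n ⟨m - 1 - (i : ℕ), by have := i.isLt; omega⟩ : ℝ) / (δ n i : ℝ))) *
        (Matrix.of fun a b => ε n (μs a) b).det) atTop (nhds 0))
    (hnonsing : ∀ lam : Matrix (Fin l) (Fin m) ℤ,
      (lam.map (Int.cast : ℤ → ℚ)).rank = l →
      ∃ᶠ n in atTop,
        ((lam.map (Int.cast : ℤ → ℝ)) * (Matrix.of fun μ ν => ε n μ ν)).det ≠ 0) :
    ((2 + m - l : ℕ) : Cardinal) ≤
      Module.rank ℚ ↥(Submodule.span ℚ (insert (1 : ℝ) (Set.range γ))) := by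
  classical
  by_contra hcon
  push_neg at hcon
  have hm : 1 ≤ m := le_trans hl hlm
  set e : Fin (m+1) → ℝ := fun j => if h : (j : ℕ) < m then γ ⟨j, h⟩ else 1 with he
  have hrange : Set.range e = insert (1:ℝ) (Set.range γ) := by
    ext x
    simp only [Set.mem_range, Set.mem_insert_iff]
    constructor
    · rintro ⟨j, rfl⟩
      by_cases h : (j:ℕ) < m
      · exact Or.inr ⟨⟨j, h⟩, by simp [he, h]⟩
      · left; simp [he, h]
    · rintro (rfl | ⟨μ, rfl⟩)
      · exact ⟨Fin.last m, by simp [he]⟩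
      · refine ⟨μ.castSucc, ?_⟩
        simp only [he, Fin.coe_castSucc, μ.isLt, dif_pos]
    -- end hrange
  have hfin : FiniteDimensional ℚ ↥(Submodule.span ℚ (insert (1 : ℝ) (Set.range γ))) := by
    apply FiniteDimensional.span_of_finite
    exact (Set.finite_range γ).insert 1
  have hfr : Module.finrank ℚ ↥(Submodule.span ℚ (insert (1 : ℝ) (Set.range γ))) ≤ m + 1 - l := by
    rw [← Module.finrank_eq_rank] at hcon
    have := Nat.cast_lt.mp hcon
    omega
  set φ : (Fin (m+1) → ℚ) →ₗ[ℚ] ℝ := Fintype.linearCombination ℚ e with hφ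
  have hφapp : ∀ a, φ a = ∑ j, a j • e j := fun a => rfl
  have hφrange : LinearMap.range φ = Submodule.span ℚ (insert (1 : ℝ) (Set.range γ)) := by
    rw [hφ, Fintype.range_linearCombination, hrange]
  have hdim : Module.finrank ℚ (Fin (m+1) → ℚ) = m + 1 := by
    simp [Module.finrank_pi]
  have hkerge : l ≤ Module.finrank ℚ (LinearMap.ker φ) := by
    have h1 := LinearMap.finrank_range_add_finrank_ker φ
    rw [hdim] at h1
    have h2 : Module.finrank ℚ ↥(LinearMap.range φ) ≤ m + 1 - l := by
      rw [hφrange]; exact hfr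
    omega
  -- the submodules U i and W i
  set U : Fin l → Submodule ℚ (Fin (m+1) → ℚ) := fun i =>
    { carrier := {a | ∀ j : Fin (m+1), m - (i:ℕ) ≤ (j:ℕ) → (j:ℕ) < m → a j = 0}
      add_mem' := fun ha hb j h1 h2 => by simp [ha j h1 h2, hb j h1 h2]
      zero_mem' := fun j _ _ => rfl
      smul_mem' := fun c a ha j h1 h2 => by simp [ha j h1 h2] } with hU
  have hUmem : ∀ (i : Fin l) (a : Fin (m+1) → ℚ),
      a ∈ U i ↔ ∀ j : Fin (m+1), m - (i:ℕ) ≤ (j:ℕ) → (j:ℕ) < m → a j = 0 := by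
    intro i a; rfl
  set W : Fin l → Submodule ℚ (Fin (m+1) → ℚ) := fun i => LinearMap.ker φ ⊓ U i with hW
  have hrankU : ∀ i : Fin l, m + 1 - (i:ℕ) ≤ Module.finrank ℚ (U i) := by
    intro i
    have hil : (i:ℕ) < l := i.isLt
    set emb : Fin (m + 1 - (i:ℕ)) → Fin (m+1) := fun k =>
      if h : (k:ℕ) < m - (i:ℕ) then ⟨k, by omega⟩ else ⟨m, by omega⟩ with hemb
    have hembval : ∀ k, ((emb k : ℕ) = k ∧ (k:ℕ) < m - (i:ℕ)) ∨ ((emb k : ℕ) = m ∧ m - (i:ℕ) ≤ (k:ℕ)) := by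
      intro k
      by_cases h : (k:ℕ) < m - (i:ℕ)
      · left; simp [hemb, h]
      · right; simp [hemb, h]; omega
    have hembinj : Function.Injective emb := by
      intro k k' hkk
      have h1 := hembval k
      have h2 := hembval k'
      have hk := k.isLt
      have hk' := k'.isLt
      have : (emb k : ℕ) = (emb k' : ℕ) := by rw [hkk]
      apply Fin.ext
      omega
    have hind : LinearIndependent ℚ (fun k => (Pi.single (emb k) (1:ℚ) : Fin (m+1) → ℚ)) := by
      have := (Pi.basisFun ℚ (Fin (m+1))).linearIndependent.comp emb hembinj
      convert this using 1
      funext k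
      simp [Pi.basisFun_apply]
    have hmem : ∀ k, (Pi.single (emb k) (1:ℚ) : Fin (m+1) → ℚ) ∈ U i := by
      intro k
      rw [hUmem]
      intro j h1 h2
      have hne : j ≠ emb k := by
        have := hembval k
        rw [Fin.ne_iff_vne]
        omega
      exact Pi.single_eq_of_ne hne 1
    have hle : Submodule.span ℚ (Set.range (fun k => (Pi.single (emb k) (1:ℚ) : Fin (m+1) → ℚ))) ≤ U i := by
      rw [Submodule.span_le]
      rintro _ ⟨k, rfl⟩
      exact hmem k
    calc m + 1 - (i:ℕ) = Fintype.card (Fin (m + 1 - (i:ℕ))) := by simp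
    _ = Module.finrank ℚ (Submodule.span ℚ (Set.range (fun k => (Pi.single (emb k) (1:ℚ) : Fin (m+1) → ℚ)))) :=
        (finrank_span_eq_card hind).symm
    _ ≤ Module.finrank ℚ (U i) := Submodule.finrank_mono hle
  have hrankW : ∀ i : Fin l, l - (i:ℕ) ≤ Module.finrank ℚ (W i) := by
    intro i
    have h1 := Submodule.finrank_sup_add_finrank_inf_eq (LinearMap.ker φ) (U i)
    have h2 : Module.finrank ℚ ↥(LinearMap.ker φ ⊔ U i) ≤ m + 1 := by
      have := Submodule.finrank_le (LinearMap.ker φ ⊔ U i)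
      rwa [hdim] at this
    have h3 := hrankU i
    have h4 : Module.finrank ℚ ↥(W i) = Module.finrank ℚ ↥(LinearMap.ker φ ⊓ U i) := rfl
    omega
  have hmonoW : ∀ i j : Fin l, i ≤ j → W j ≤ W i := by
    intro i j hij
    have hij' : (i:ℕ) ≤ (j:ℕ) := hij
    apply inf_le_inf_left
    intro a ha
    rw [hUmem] at ha ⊢
    intro jj h1 h2
    exact ha jj (by omega) h2
  obtain ⟨v, hvW, hvind⟩ := aux_chain l W hmonoW hrankW
  have hvker : ∀ i, φ (v i) = 0 := fun i => LinearMap.mem_ker.mp (Submodule.mem_inf.mp (hvW i)).1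
  have hvU : ∀ i, v i ∈ U i := fun i => (Submodule.mem_inf.mp (hvW i)).2
  -- clear denominators
  set d : Fin l → ℕ := fun i => ∏ j, (v i j).den with hdd
  have hdpos : ∀ i, 0 < d i := by
    intro i
    apply Finset.prod_pos
    intro j _
    exact (v i j).pos
  have hwex : ∀ i j, ∃ z : ℤ, (z:ℚ) = v i j * d i := by
    intro i j
    exact aux_rat_mul_den_int _ _ (Finset.dvd_prod_of_mem _ (Finset.mem_univ j))
  set w : Fin l → Fin (m+1) → ℤ := fun i j => (hwex i j).choose with hww
  have hwspec : ∀ i j, ((w i j : ℚ)) = v i j * d i := fun i j => (hwex i j).choose_spec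
  set lam : Matrix (Fin l) (Fin m) ℤ := Matrix.of fun i μ => w i μ.castSucc with hlam
  set b : Fin l → ℤ := fun i => w i (Fin.last m) with hb
  -- support condition
  have hsupp : ∀ (i : Fin l) (μ : Fin m), m - 1 - (i:ℕ) < (μ:ℕ) → lam i μ = 0 := by
    intro i μ hμ
    have hil : (i:ℕ) < l := i.isLt
    have h0 : v i μ.castSucc = 0 := by
      have := (hUmem i (v i)).mp (hvU i) μ.castSucc
      simp only [Fin.coe_castSucc] at this
      exact this (by omega) μ.isLt
    have h1 := hwspec i μ.castSucc
    rw [h0, zero_mul] at h1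
    have : lam i μ = w i μ.castSucc := rfl
    rw [this]
    exact_mod_cast h1
  -- the linear relation
  have hrel : ∀ i, ∑ μ : Fin m, (lam i μ : ℝ) * γ μ = -(b i : ℝ) := by
    intro i
    have h0 : ∑ j : Fin (m+1), v i j • e j = 0 := by
      have h := hvker i
      rw [hφapp] at h
      exact h
    have he1 : e (Fin.last m) = 1 := by simp [he]
    have he2 : ∀ μ : Fin m, e μ.castSucc = γ μ := by
      intro μ
      simp only [he, Fin.coe_castSucc, μ.isLt, dif_pos]
    rw [Fin.sum_univ_castSucc] at h0
    have h0' : ∑ μ : Fin m, (v i μ.castSucc : ℝ) * γ μ + (v i (Fin.last m) : ℝ) = 0 := by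
      have : ∀ μ : Fin m, v i μ.castSucc • e μ.castSucc = (v i μ.castSucc : ℝ) * γ μ := by
        intro μ; rw [he2, Rat.smul_def]
      rw [Finset.sum_congr rfl (fun μ _ => this μ)] at h0
      rw [he1, Rat.smul_def, mul_one] at h0
      exact h0
    have hwR : ∀ j, ((w i j : ℝ)) = (v i j : ℝ) * d i := by
      intro j
      have := hwspec i j
      have h2 := congrArg (fun x : ℚ => (x : ℝ)) this
      push_cast at h2
      exact h2
    have hkey : ∑ μ : Fin m, (lam i μ : ℝ) * γ μ + (b i : ℝ) =
        (d i : ℝ) * (∑ μ : Fin m, (v i μ.castSucc : ℝ) * γ μ + (v i (Fin.last m) : ℝ)) := by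
      rw [mul_add, Finset.mul_sum]
      have : ∀ μ : Fin m, (lam i μ : ℝ) * γ μ = (d i : ℝ) * ((v i μ.castSucc : ℝ) * γ μ) := by
        intro μ
        have : (lam i μ : ℝ) = (w i μ.castSucc : ℝ) := rfl
        rw [this, hwR]
        ring
      rw [Finset.sum_congr rfl (fun μ _ => this μ)]
      have : (b i : ℝ) = (d i : ℝ) * (v i (Fin.last m) : ℝ) := by
        have : (b i : ℝ) = (w i (Fin.last m) : ℝ) := rfl
        rw [this, hwR]; ring
      rw [this]
    have := hkey
    rw [h0', mul_zero] at this
    linarith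
  -- rank of the rational matrix
  have hrankQ : (lam.map (Int.cast : ℤ → ℚ)).rank = l := by
    set π : (Fin (m+1) → ℚ) →ₗ[ℚ] (Fin m → ℚ) :=
      LinearMap.funLeft ℚ ℚ (Fin.castSucc : Fin m → Fin (m+1)) with hπ
    have hπapp : ∀ (a : Fin (m+1) → ℚ) (μ : Fin m), π a μ = a μ.castSucc := fun a μ => rfl
    have hπv : LinearIndependent ℚ (π ∘ v) := by
      apply hvind.map
      rw [Submodule.disjoint_def]
      intro x hx hxker
      have hxR : x ∈ LinearMap.ker φ := by
        have hle : Submodule.span ℚ (Set.range v) ≤ LinearMap.ker φ := by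
          rw [Submodule.span_le]
          rintro _ ⟨i, rfl⟩
          exact (Submodule.mem_inf.mp (hvW i)).1
        exact hle hx
      have hx0 : ∀ μ : Fin m, x μ.castSucc = 0 := by
        intro μ
        have := LinearMap.mem_ker.mp hxker
        have h2 := congrFun this μ
        rw [hπapp] at h2
        exact h2
      have hlast : x (Fin.last m) = 0 := by
        have hφx : φ x = 0 := LinearMap.mem_ker.mp hxR
        rw [hφapp, Fin.sum_univ_castSucc] at hφx
        have he1 : e (Fin.last m) = 1 := by simp [he]
        simp only [hx0, zero_smul, Finset.sum_const_zero, zero_add, he1, Rat.smul_def,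
          mul_one] at hφx
        exact_mod_cast hφx
      funext j
      exact Fin.lastCases hlast hx0 j
    have hrows : LinearIndependent ℚ (fun i => (lam.map (Int.cast : ℤ → ℚ)) i) := by
      set u : Fin l → ℚˣ := fun i => Units.mk0 (d i : ℚ) (by
        have := hdpos i
        exact_mod_cast this.ne') with hu
      have h2 := hπv.units_smul u
      convert h2 using 1
      funext i
      funext μ
      have h3 : (u • (π ∘ v)) i μ = (d i : ℚ) * v i μ.castSucc := by
        simp [hu, hπapp, Pi.smul_apply', Units.smul_def, Rat.smul_def]
      rw [h3]
      have h4 : (lam.map (Int.cast : ℤ → ℚ)) i μ = ((w i μ.castSucc : ℚ)) := rfl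
      rw [h4, hwspec]
      ring
    rw [← Matrix.rank_transpose, Matrix.rank_eq_finrank_span_cols]
    exact (finrank_span_eq_card hrows).trans (by simp)
  -- index function
  set idx : Fin l → Fin m := fun i => ⟨m - 1 - (i:ℕ), by have := i.isLt; omega⟩ with hidx
  -- the rational matrix A
  set AQ : ℕ → Matrix (Fin l) (Fin l) ℚ := fun n =>
    Matrix.of fun i ν => -(b i : ℚ) * q n ν - ∑ μ, (lam i μ : ℚ) * p n μ ν with hAQ
  have hAcast : ∀ n, (lam.map (Int.cast : ℤ → ℝ)) * (Matrix.of fun μ ν => ε n μ ν) =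
      (AQ n).map (Rat.cast : ℚ → ℝ) := by
    intro n
    ext i ν
    have hLHS : ((lam.map (Int.cast : ℤ → ℝ)) * (Matrix.of fun μ ν => ε n μ ν)) i ν =
        ∑ μ, (lam i μ : ℝ) * ε n μ ν := by
      rw [Matrix.mul_apply]
      rfl
    rw [hLHS]
    have h1 : ∀ μ : Fin m, (lam i μ : ℝ) * ε n μ ν =
        (q n ν : ℝ) * ((lam i μ : ℝ) * γ μ) - (lam i μ : ℝ) * (p n μ ν : ℝ) := by
      intro μ; rw [hε]; ring
    rw [Finset.sum_congr rfl (fun μ _ => h1 μ), Finset.sum_sub_distrib, ← Finset.mul_sum,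
      hrel i]
    have hRHS : ((AQ n).map (Rat.cast : ℚ → ℝ)) i ν =
        ((-(b i : ℚ) * q n ν - ∑ μ, (lam i μ : ℚ) * p n μ ν : ℚ) : ℝ) := rfl
    rw [hRHS]
    push_cast
    ring
  -- integrality
  have hint : ∀ (n : ℕ) (i ν : Fin l),
      ∃ z : ℤ, (D n (idx i) : ℚ) * AQ n i ν = (z:ℚ) * (δ n ν : ℚ) := by
    intro n i ν
    obtain ⟨a, ha⟩ := hq n ν
    have hterm : ∀ μ : Fin m, ∃ zμ : ℤ,
        (D n (idx i):ℚ) * ((lam i μ:ℚ) * p n μ ν) = (zμ:ℚ) * (δ n ν : ℚ) := by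
      intro μ
      by_cases hμ : (μ:ℕ) ≤ m - 1 - (i:ℕ)
      · obtain ⟨c, hc⟩ := hp n μ (idx i) (by
          rw [Fin.le_def]
          simpa [hidx] using hμ) ν
        refine ⟨lam i μ * c, ?_⟩
        have : (D n (idx i):ℚ) * ((lam i μ:ℚ) * p n μ ν) =
            (lam i μ:ℚ) * ((D n (idx i):ℚ) * p n μ ν) := by ring
        rw [this, hc]
        push_cast
        ring
      · refine ⟨0, ?_⟩
        rw [hsupp i μ (by omega)]
        push_cast
        ring
    choose g hg using hterm
    refine ⟨-(b i) * (D n (idx i) : ℤ) * a - ∑ μ, g μ, ?_⟩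
    have expand : (D n (idx i):ℚ) * AQ n i ν =
        -(b i:ℚ) * ((D n (idx i):ℚ) * q n ν) -
          ∑ μ, (D n (idx i):ℚ) * ((lam i μ:ℚ) * p n μ ν) := by
      have hA : AQ n i ν = -(b i : ℚ) * q n ν - ∑ μ, (lam i μ : ℚ) * p n μ ν := rfl
      rw [hA, mul_sub, Finset.mul_sum]
      ring
    rw [expand, ha, Finset.sum_congr rfl (fun μ _ => hg μ), ← Finset.sum_mul]
    push_cast
    ring
  -- the integer matrices
  set B : ℕ → Matrix (Fin l) (Fin l) ℤ := fun n =>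
    Matrix.of fun i ν => (hint n i ν).choose with hBB
  have hBspec : ∀ n (i ν : Fin l),
      (D n (idx i):ℚ) * AQ n i ν = (B n i ν : ℚ) * (δ n ν : ℚ) :=
    fun n i ν => (hint n i ν).choose_spec
  -- determinant identity over ℚ
  have hBdet : ∀ n, ((B n).det : ℚ) * ∏ ν, (δ n ν : ℚ) =
      (∏ i, (D n (idx i) : ℚ)) * (AQ n).det := by
    intro n
    have h1 : Matrix.det (Matrix.of fun (i ν : Fin l) => (D n (idx i):ℚ) * AQ n i ν) =
        (∏ i, (D n (idx i):ℚ)) * (AQ n).det :=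
      Matrix.det_mul_column _ _
    have h2 : (Matrix.of fun (i ν : Fin l) => (D n (idx i):ℚ) * AQ n i ν) =
        (Matrix.of fun (i ν : Fin l) => (δ n ν : ℚ) * ((B n).map (Int.cast : ℤ → ℚ)) i ν) := by
      ext i ν
      have : ((B n).map (Int.cast : ℤ → ℚ)) i ν = ((B n i ν : ℚ)) := rfl
      simp only [Matrix.of_apply]
      rw [this, hBspec n i ν]
      ring
    have h3 : Matrix.det (Matrix.of fun (i ν : Fin l) => (δ n ν : ℚ) *
        ((B n).map (Int.cast : ℤ → ℚ)) i ν) =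
        (∏ ν, (δ n ν : ℚ)) * Matrix.det ((B n).map (Int.cast : ℤ → ℚ)) :=
      Matrix.det_mul_row _ _
    have h4 : Matrix.det ((B n).map (Int.cast : ℤ → ℚ)) = ((B n).det : ℚ) :=
      ((RingHom.map_det (Int.castRingHom ℚ) (B n)).symm).trans (by norm_cast)
    rw [← h1, h2, h3, h4]
    ring
  -- the real scaling factor
  set P : ℕ → ℝ := fun n => ∏ i : Fin l, ((D n (idx i) : ℝ) / (δ n i : ℝ)) with hP
  have hPpos : ∀ n, 0 < P n := by
    intro n
    apply Finset.prod_pos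
    intro i _
    apply div_pos
    · exact_mod_cast hD n (idx i)
    · exact_mod_cast hδ n i
  -- relation between det B and the real determinant
  have hBP : ∀ n, ((B n).det : ℝ) =
      P n * ((lam.map (Int.cast : ℤ → ℝ)) * (Matrix.of fun μ ν => ε n μ ν)).det := by
    intro n
    have hdetcast : (((AQ n).det : ℚ) : ℝ) = ((AQ n).map (Rat.cast : ℚ → ℝ)).det :=
      (RingHom.map_det (Rat.castHom ℝ) (AQ n)).symm ▸ (by norm_cast)
    have hc := congrArg (fun x : ℚ => (x : ℝ)) (hBdet n)
    push_cast at hc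
    rw [hAcast n, ← hdetcast]
    have hδne : (∏ ν, (δ n ν : ℝ)) ≠ 0 := by
      apply Finset.prod_ne_zero_iff.mpr
      intro ν _
      exact_mod_cast (hδ n ν).ne'
    have hPd : P n = (∏ i, (D n (idx i) : ℝ)) / (∏ ν, (δ n ν : ℝ)) :=
      Finset.prod_div_distrib _ _
    rw [hPd]
    field_simp
    have hB' : (((B n).map fun x : ℤ => (x : ℚ)).map fun x : ℚ => (x : ℝ)).det = ((B n).det : ℝ) := by
      rw [Matrix.map_map]
      rw [show ((fun x : ℚ => (x : ℝ)) ∘ fun x : ℤ => (x : ℚ)) = (Int.castRingHom ℝ : ℤ → ℝ) by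
        funext x; simp]
      exact (RingHom.map_det (Int.castRingHom ℝ) (B n)).symm
    linear_combination hc - (∏ ν, (δ n ν : ℝ)) * hB' + (∏ i, (D n (idx i) : ℝ)) * hdetcast.symm
  -- multilinear expansion of the determinant
  have hexp : ∀ n, ((lam.map (Int.cast : ℤ → ℝ)) * (Matrix.of fun μ ν => ε n μ ν)).det =
      ∑ r : Fin l → Fin m, (∏ i, (lam i (r i) : ℝ)) *
        (Matrix.of fun a ν => ε n (r a) ν).det := by
    intro n
    have h0 : (lam.map (Int.cast : ℤ → ℝ)) * (Matrix.of fun μ ν => ε n μ ν) =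
        Matrix.of (fun i => ∑ μ : Fin m, (lam i μ : ℝ) • (fun ν => ε n μ ν)) := by
      ext i ν
      rw [Matrix.mul_apply]
      simp only [Matrix.of_apply, Finset.sum_apply, Pi.smul_apply, smul_eq_mul,
        Matrix.map_apply]
    rw [h0]
    have h1 : Matrix.det (Matrix.of (fun i => ∑ μ : Fin m, (lam i μ : ℝ) • (fun ν => ε n μ ν))) =
        (Matrix.detRowAlternating : (Fin l → ℝ) [⋀^Fin l]→ₗ[ℝ] ℝ)
          (fun i => ∑ μ : Fin m, (lam i μ : ℝ) • (fun ν => ε n μ ν)) := rfl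
    have hms := MultilinearMap.map_sum
      ((Matrix.detRowAlternating : (Fin l → ℝ) [⋀^Fin l]→ₗ[ℝ] ℝ).toMultilinearMap)
      (g := fun (i : Fin l) (μ : Fin m) => (lam i μ : ℝ) • (fun ν => ε n μ ν))
    rw [h1]
    refine hms.trans ?_
    apply Finset.sum_congr rfl
    intro r _
    have h2 : ((Matrix.detRowAlternating : (Fin l → ℝ) [⋀^Fin l]→ₗ[ℝ] ℝ).toMultilinearMap)
        (fun i => (lam i (r i) : ℝ) • (fun ν => ε n (r i) ν)) =
        (∏ i, (lam i (r i) : ℝ)) • ((Matrix.detRowAlternating :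
          (Fin l → ℝ) [⋀^Fin l]→ₗ[ℝ] ℝ).toMultilinearMap) (fun i => (fun ν => ε n (r i) ν)) :=
      MultilinearMap.map_smul_univ _ _ _
    refine h2.trans ?_
    rw [smul_eq_mul]
    rfl
  -- each scaled minor tends to zero
  have htend0 : ∀ r : Fin l → Fin m,
      Tendsto (fun n => P n * (Matrix.of fun a ν => ε n (r a) ν).det) atTop (nhds 0) := by
    intro r
    by_cases hr : Function.Injective r
    · set s : Finset (Fin m) := Finset.image r Finset.univ with hs
      have hcard : s.card = l := by
        rw [hs, Finset.card_image_of_injective _ hr, Finset.card_univ, Fintype.card_fin]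
      set g := s.orderEmbOfFin hcard with hg
      have hmemg : ∀ a, r a ∈ Set.range g := by
        intro a
        rw [Finset.range_orderEmbOfFin]
        exact Finset.mem_coe.mpr (Finset.mem_image_of_mem r (Finset.mem_univ a))
      choose τ hτ using hmemg
      have hτinj : Function.Injective τ := by
        intro a a' haa
        apply hr
        rw [← hτ a, ← hτ a', haa]
      have hτbij : Function.Bijective τ := Finite.injective_iff_bijective.mp hτinj
      set σ : Equiv.Perm (Fin l) := Equiv.ofBijective τ hτbij with hσ
      have key : ∀ n, (Matrix.of fun a ν => ε n (r a) ν) =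
          (Matrix.of fun a ν => ε n (g a) ν).submatrix σ id := by
        intro n
        ext a ν
        have : σ a = τ a := rfl
        simp only [Matrix.submatrix_apply, Matrix.of_apply, this, id_eq, hτ a]
      have hdg := hdet (fun a => g a) g.strictMono
      have heq : (fun n => P n * (Matrix.of fun a ν => ε n (r a) ν).det) =
          (fun n => ((Equiv.Perm.sign σ : ℤ) : ℝ) *
            (P n * (Matrix.of fun a ν => ε n (g a) ν).det)) := by
        funext n
        rw [key n, Matrix.det_permute]
        ring
      rw [heq]
      have h5 := hdg.const_mul ((Equiv.Perm.sign σ : ℤ) : ℝ)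
      rw [mul_zero] at h5
      exact h5
    · obtain ⟨a, a', haa, hne⟩ : ∃ a a', r a = r a' ∧ a ≠ a' := by
        rw [Function.not_injective_iff] at hr
        exact hr
      have hz : ∀ n, (Matrix.of fun a ν => ε n (r a) ν).det = 0 := by
        intro n
        apply Matrix.det_zero_of_row_eq hne
        funext ν
        simp only [Matrix.of_apply, haa]
      simp only [hz, mul_zero]
      exact tendsto_const_nhds
  -- the integer determinants tend to zero
  have htendB : Tendsto (fun n => ((B n).det : ℝ)) atTop (nhds 0) := by
    have heq : (fun n => ((B n).det : ℝ)) = fun n =>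
        ∑ r : Fin l → Fin m, (∏ i, (lam i (r i) : ℝ)) *
          (P n * (Matrix.of fun a ν => ε n (r a) ν).det) := by
      funext n
      rw [hBP n, hexp n, Finset.mul_sum]
      apply Finset.sum_congr rfl
      intro r _
      ring
    rw [heq]
    have := tendsto_finset_sum (Finset.univ : Finset (Fin l → Fin m))
      (fun r _ => (htend0 r).const_mul (∏ i, (lam i (r i) : ℝ)))
    simpa using this
  -- the nonvanishing
  have hfreq : ∃ᶠ n in atTop, (B n).det ≠ 0 := by
    apply (hnonsing lam hrankQ).mono
    intro n hn h0
    apply hn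
    have := hBP n
    rw [h0] at this
    simp only [Int.cast_zero] at this
    have hPne := (hPpos n).ne'
    rcases mul_eq_zero.mp this.symm with h | h
    · exact absurd h hPne
    · exact h
  -- contradiction
  have hev : ∀ᶠ n in atTop, |((B n).det : ℝ)| < 1 := by
    have := htendB (Metric.ball_mem_nhds (0:ℝ) one_pos)
    filter_upwards [this] with n hn
    simpa [Real.dist_eq] using hn
  obtain ⟨n, hn1, hn2⟩ := (hfreq.and_eventually hev).exists
  have h1 : (1:ℝ) ≤ |((B n).det : ℝ)| := by
    have := Int.one_le_abs (by exact_mod_cast hn1 : (B n).det ≠ 0)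
    calc (1:ℝ) = ((1:ℤ):ℝ) := by norm_num
    _ ≤ ((|(B n).det| : ℤ) : ℝ) := by exact_mod_cast this
    _ = |((B n).det : ℝ)| := by push_cast; ring
  linarith
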